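/- For a prime power q₂ = p^γ with γ ≥ 2 and integers m₂, m'₂ coprime to p, the sum ∑*_{a mod p^γ} S(a, m₂; p^γ)·S(a, m'₂; p^γ) is bounded in absolute value by 2·p^{2γ}·[m₂ ≡ m'₂ mod p^{γ−1}]. -/

import Mathlib

/-- `e(x/q) = e^{2πix/q}` for `x` a residue mod `q`. -/
noncomputable def eZ (q : ℕ) (x : ZMod q) : ℂ :=
  Complex.exp (2 * Real.pi * Complex.I * (x.val : ℂ) / (q : ℂ))

/-- The Kloosterman sum `S(a,b;q) = ∑*_{x mod q} e((ax + b x̄)/q)`. -/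
noncomputable def Kl (q : ℕ) [NeZero q] (a b : ZMod q) : ℂ :=
  ∑ x : (ZMod q)ˣ, eZ q (a * (x : ZMod q) + b * ((x⁻¹ : (ZMod q)ˣ) : ZMod q))

lemma eZ_eq_std (q : ℕ) [NeZero q] (x : ZMod q) : eZ q x = ZMod.stdAddChar x := by
  rw [ZMod.stdAddChar_apply, ZMod.toCircle_apply, eZ]


lemma std_lower (q k rr : ℕ) [NeZero q] [NeZero rr] (hk : k ≠ 0) (h : q = k * rr) (n : ℤ) :
    ZMod.stdAddChar ((k * n : ℤ) : ZMod q) = ZMod.stdAddChar ((n : ℤ) : ZMod rr) := by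
  rw [ZMod.stdAddChar_coe, ZMod.stdAddChar_coe]
  congr 1
  have hk' : (k : ℂ) ≠ 0 := Nat.cast_ne_zero.2 hk
  have hrr : (rr : ℂ) ≠ 0 := Nat.cast_ne_zero.2 (NeZero.ne rr)
  subst h
  push_cast
  field_simp

open Finset in
/-- Splitting a sum over `ZMod (p^γ)` into units and non-units (the latter parametrized
by `ZMod (p^(γ-1))` via multiplication by `p`). -/
lemma sum_split (p γ : ℕ) [NeZero p] (hp : p.Prime) (hγ : 1 ≤ γ) (f : ZMod (p^γ) → ℂ) :
    ∑ x : ZMod (p^γ), f x =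
      (∑ a : (ZMod (p^γ))ˣ, f (a : ZMod (p^γ))) +
      ∑ y : ZMod (p^(γ-1)), f ((p * y.val : ℕ) : ZMod (p^γ)) := by
  haveI : Fact p.Prime := ⟨hp⟩
  have hq : p^γ = p * p^(γ-1) := by
    nth_rewrite 1 [show γ = (γ-1)+1 by omega]
    rw [pow_succ']
  set F : (ZMod (p^γ))ˣ ⊕ ZMod (p^(γ-1)) → ZMod (p^γ) :=
    Sum.elim (fun a => (a : ZMod (p^γ))) (fun y => ((p * y.val : ℕ) : ZMod (p^γ))) with hF
  have hunit : ∀ y : ZMod (p^(γ-1)), ¬ IsUnit (((p * y.val : ℕ) : ZMod (p^γ))) := by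
    intro y hu
    have h0 : (ZMod.castHom (dvd_pow_self p (by omega) : p ∣ p^γ) (ZMod p))
        (((p * y.val : ℕ) : ZMod (p^γ))) = 0 := by
      rw [map_natCast]
      simp [Nat.cast_mul]
    have := hu.map (ZMod.castHom (dvd_pow_self p (by omega) : p ∣ p^γ) (ZMod p))
    rw [h0] at this
    exact this.ne_zero rfl
  have hbij : Function.Bijective F := by
    constructor
    · rintro (a | y) (b | z) h
      · simp only [hF, Sum.elim_inl] at h
        exact congrArg Sum.inl (Units.ext h)
      · have hu : IsUnit (F (Sum.inl a)) := a.isUnit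
        rw [h] at hu
        exact absurd hu (hunit z)
      · have hu : IsUnit (F (Sum.inl b)) := b.isUnit
        rw [← h] at hu
        exact absurd hu (hunit y)
      · simp only [hF, Sum.elim_inr] at h
        have h1 : p * y.val < p^γ := by
          rw [hq]
          exact (Nat.mul_lt_mul_left hp.pos).2 (ZMod.val_lt y)
        have h2 : p * z.val < p^γ := by
          rw [hq]
          exact (Nat.mul_lt_mul_left hp.pos).2 (ZMod.val_lt z)
        have := (ZMod.val_cast_of_lt h1) ▸ (ZMod.val_cast_of_lt h2) ▸ congrArg ZMod.val h
        have hyz : y.val = z.val := by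
          exact Nat.eq_of_mul_eq_mul_left hp.pos this
        exact congrArg Sum.inr (ZMod.val_injective _ hyz)
    · intro x
      by_cases hx : IsUnit x
      · exact ⟨Sum.inl hx.unit, by simp [hF]⟩
      · have hdvd : p ∣ x.val := by
          by_contra hnd
          have : Nat.Coprime x.val (p^γ) :=
            Nat.Coprime.pow_right _ ((Nat.Prime.coprime_iff_not_dvd hp).2 hnd).symm
          have := (ZMod.isUnit_iff_coprime x.val (p^γ)).2 this
          rw [ZMod.natCast_val, ZMod.cast_id] at this
          exact hx this
        obtain ⟨c, hc⟩ := hdvd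
        have hclt : c < p^(γ-1) := by
          have := ZMod.val_lt x
          rw [hc, hq] at this
          exact lt_of_mul_lt_mul_left this (Nat.zero_le p)
        refine ⟨Sum.inr (c : ZMod (p^(γ-1))), ?_⟩
        simp only [hF, Sum.elim_inr]
        rw [ZMod.val_cast_of_lt hclt, ← hc, ZMod.natCast_val, ZMod.cast_id]
  rw [← Fintype.sum_bijective F hbij (fun i => f (F i)) f (fun i => rfl),
    Fintype.sum_sum_type]
  rfl

open Finset in
/-- Ramanujan sum mod `p^γ`. -/
lemma ramanujan (p γ : ℕ) [NeZero p] (hp : p.Prime) (hγ : 1 ≤ γ) (t : ZMod (p^γ)) :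
    ∑ a : (ZMod (p^γ))ˣ, ZMod.stdAddChar ((a : ZMod (p^γ)) * t) =
      (if t = 0 then ((p^γ : ℕ) : ℂ) else 0) -
      (if ((t.val : ℕ) : ZMod (p^(γ-1))) = 0 then ((p^(γ-1) : ℕ) : ℂ) else 0) := by
  haveI : Fact p.Prime := ⟨hp⟩
  have hq : p^γ = p * p^(γ-1) := by
    nth_rewrite 1 [show γ = (γ-1)+1 by omega]
    rw [pow_succ']
  have hsplit := sum_split p γ hp hγ (fun x => ZMod.stdAddChar (x * t))
  have hfull : ∑ x : ZMod (p^γ), ZMod.stdAddChar (x * t) =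
      if t = 0 then ((p^γ : ℕ) : ℂ) else 0 := by
    rw [AddChar.sum_mulShift t (ZMod.isPrimitive_stdAddChar _)]
    simp [ZMod.card]
  have hnon : ∀ y : ZMod (p^(γ-1)),
      ZMod.stdAddChar (((p * y.val : ℕ) : ZMod (p^γ)) * t) =
      ZMod.stdAddChar ((y * (t.val : ZMod (p^(γ-1))) : ZMod (p^(γ-1)))) := by
    intro y
    have h1 : (((p * y.val : ℕ) : ZMod (p^γ)) * t) = (((p : ℤ) * (y.val * t.val) : ℤ) : ZMod (p^γ)) := by
      rw [Nat.cast_mul, Int.cast_mul, Int.cast_mul, Int.cast_natCast, Int.cast_natCast,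
        Int.cast_natCast, ZMod.natCast_val t, ZMod.cast_id]
      ring
    have h2 : ((y * (t.val : ZMod (p^(γ-1))) : ZMod (p^(γ-1)))) = (((y.val * t.val : ℤ)) : ZMod (p^(γ-1))) := by
      rw [Int.cast_mul, Int.cast_natCast, Int.cast_natCast, ZMod.natCast_val y, ZMod.cast_id]
    rw [h1, h2, std_lower (p^γ) p (p^(γ-1)) hp.pos.ne' hq]
  have hnonsum : ∑ y : ZMod (p^(γ-1)),
      ZMod.stdAddChar (((p * y.val : ℕ) : ZMod (p^γ)) * t) =
      if ((t.val : ℕ) : ZMod (p^(γ-1))) = 0 then ((p^(γ-1) : ℕ) : ℂ) else 0 := by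
    simp_rw [hnon]
    rw [AddChar.sum_mulShift _ (ZMod.isPrimitive_stdAddChar _)]
    simp [ZMod.card]
  rw [hsplit, hnonsum] at hfull
  rw [← hfull]
  ring


lemma isUnit_intCast_pow (p n : ℕ) [NeZero p] (hp : p.Prime) (hn : n ≠ 0) (m : ℤ) (hm : ¬(p:ℤ) ∣ m) :
    IsUnit ((m : ZMod (p^n))) := by
  set a : ZMod (p^n) := (m : ZMod (p^n)) with ha
  have hnd : ¬ p ∣ a.val := by
    intro hd
    apply hm
    rw [← ZMod.intCast_zmod_eq_zero_iff_dvd]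
    have h1 : ((a.val : ℕ) : ZMod p) = 0 := (ZMod.natCast_eq_zero_iff _ _).2 hd
    have h2 : ((a.val : ℕ) : ZMod p) = (ZMod.castHom (dvd_pow_self p (n := n) hn) (ZMod p)) a := by
      rw [ZMod.castHom_apply, ZMod.natCast_val]
    rw [h2, ha, map_intCast] at h1
    exact h1
  have : Nat.Coprime a.val (p^n) :=
    Nat.Coprime.pow_right _ ((Nat.Prime.coprime_iff_not_dvd hp).2 hnd).symm
  have := (ZMod.isUnit_iff_coprime a.val (p^n)).2 this
  rwa [ZMod.natCast_val, ZMod.cast_id] at this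

open Finset in
lemma inner_vanish (p γ : ℕ) [NeZero p] (hp : p.Prime) (hγ : 2 ≤ γ) (m m' : ℤ)
    (hm' : ¬(p:ℤ) ∣ m') (x : (ZMod (p^γ))ˣ) :
    ∑ y : (ZMod (p^γ))ˣ, ZMod.stdAddChar ((m : ZMod (p^γ)) * ((x⁻¹ : (ZMod (p^γ))ˣ) : ZMod (p^γ))
        + (m' : ZMod (p^γ)) * ((y⁻¹ : (ZMod (p^γ))ˣ) : ZMod (p^γ))) *
      (if ((((x : ZMod (p^γ)) + (y : ZMod (p^γ))).val : ℕ) : ZMod (p^(γ-1))) = 0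
        then ((p^(γ-1) : ℕ) : ℂ) else 0) = 0 := by
  haveI : Fact p.Prime := ⟨hp⟩
  have hq : p^γ = p^(γ-1) * p := by rw [← pow_succ]; congr 1; omega
  have hrpos : 0 < p^(γ-1) := pow_pos hp.pos _
  set u : ZMod (p^γ) := ↑x with hu
  set v : ZMod (p^γ) := ((x⁻¹ : (ZMod (p^γ))ˣ) : ZMod (p^γ)) with hv
  have huv : u * v = 1 := x.mul_inv
  set ω : ZMod p → ZMod (p^γ) := fun t => ((p^(γ-1) * t.val : ℕ) : ZMod (p^γ)) with hω
  have hω2 : ∀ t : ZMod p, ω t * ω t = 0 := by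
    intro t
    rw [hω]
    simp only
    rw [← Nat.cast_mul, ZMod.natCast_eq_zero_iff]
    have h1 : p^γ ∣ p^(γ-1) * p^(γ-1) := by
      rw [← pow_add]; exact pow_dvd_pow p (by omega)
    have h2 : (p^(γ-1) * t.val) * (p^(γ-1) * t.val) = (p^(γ-1)*p^(γ-1)) * (t.val*t.val) := by ring
    rw [h2]
    exact h1.mul_right _
  have hmul : ∀ t, (-u + ω t) * (-v - v*v*ω t) = 1 := by
    intro t
    linear_combination (1 + v * ω t) * huv - v^2 * (hω2 t)
  set Y : ZMod p → (ZMod (p^γ))ˣ := fun t =>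
    ⟨-u + ω t, -v - v*v*ω t, hmul t, by rw [mul_comm]; exact hmul t⟩ with hY
  -- rewrite the sum over the fiber as a sum over `ZMod p`
  have step1 : ∑ y : (ZMod (p^γ))ˣ, ZMod.stdAddChar ((m : ZMod (p^γ)) * v
        + (m' : ZMod (p^γ)) * ((y⁻¹ : (ZMod (p^γ))ˣ) : ZMod (p^γ))) *
      (if (((u + (y : ZMod (p^γ))).val : ℕ) : ZMod (p^(γ-1))) = 0
        then ((p^(γ-1) : ℕ) : ℂ) else 0) =
      ∑ t : ZMod p, ZMod.stdAddChar ((m : ZMod (p^γ)) * v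
        + (m' : ZMod (p^γ)) * (-v - v*v*ω t)) * ((p^(γ-1) : ℕ) : ℂ) := by
    simp_rw [mul_ite, mul_zero]
    rw [← Finset.sum_filter]
    refine Finset.sum_nbij' (fun y => (((u + (y : ZMod (p^γ))).val / p^(γ-1) : ℕ) : ZMod p))
      Y ?_ ?_ ?_ ?_ ?_
    · intro y _; exact Finset.mem_univ _
    · -- Y t lands in the fiber
      intro t _
      rw [Finset.mem_filter]
      refine ⟨Finset.mem_univ _, ?_⟩
      have hYval : ((Y t : ZMod (p^γ))) = -u + ω t := rfl
      rw [hYval]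
      have : u + (-u + ω t) = ω t := by ring
      rw [this, ZMod.natCast_eq_zero_iff]
      rw [hω]; simp only
      rw [ZMod.val_natCast]
      refine Nat.dvd_mod_iff ?_ |>.2 ⟨t.val, rfl⟩
      rw [hq]; exact Dvd.intro p rfl
    · -- left inverse : Y (index y) = y
      intro y hy
      rw [Finset.mem_filter] at hy
      have hdvd : p^(γ-1) ∣ (u + (y : ZMod (p^γ))).val :=
        (ZMod.natCast_eq_zero_iff _ _).1 hy.2
      set w := (u + (y : ZMod (p^γ))).val with hw
      have hwlt : w < p^γ := ZMod.val_lt _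
      have hdivlt : w / p^(γ-1) < p := by
        rw [Nat.div_lt_iff_lt_mul hrpos, mul_comm, ← hq]; exact hwlt
      beta_reduce
      apply Units.ext
      have hYval : ((Y ((w / p^(γ-1) : ℕ) : ZMod p) : ZMod (p^γ)))
          = -u + ω ((w / p^(γ-1) : ℕ) : ZMod p) := rfl
      rw [hYval, hω]
      simp only
      rw [ZMod.val_natCast_of_lt hdivlt, Nat.mul_div_cancel' hdvd]
      have : ((w : ℕ) : ZMod (p^γ)) = u + (y : ZMod (p^γ)) := by
        rw [hw, ZMod.natCast_val, ZMod.cast_id]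
      rw [this]; ring
    · -- right inverse
      intro t _
      beta_reduce
      have hYval : ((Y t : ZMod (p^γ))) = -u + ω t := rfl
      have : u + ((Y t : ZMod (p^γ))) = ω t := by rw [hYval]; ring
      rw [this, hω]
      simp only
      rw [ZMod.val_natCast, Nat.mod_eq_of_lt (by rw [hq]; exact (Nat.mul_lt_mul_left hrpos).2 (ZMod.val_lt t)),
        Nat.mul_div_cancel_left _ hrpos, ZMod.natCast_val, ZMod.cast_id]
    · -- values agree
      intro y hy
      beta_reduce
      rw [Finset.mem_filter] at hy
      congr 1
      have hdvd : p^(γ-1) ∣ (u + (y : ZMod (p^γ))).val :=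
        (ZMod.natCast_eq_zero_iff _ _).1 hy.2
      set w := (u + (y : ZMod (p^γ))).val with hw
      have hwlt : w < p^γ := ZMod.val_lt _
      have hdivlt : w / p^(γ-1) < p := by
        rw [Nat.div_lt_iff_lt_mul hrpos, mul_comm, ← hq]; exact hwlt
      have hYeq : Y (((w / p^(γ-1) : ℕ) : ZMod p)) = y := by
        apply Units.ext
        have hYval : ((Y ((w / p^(γ-1) : ℕ) : ZMod p) : ZMod (p^γ)))
            = -u + ω ((w / p^(γ-1) : ℕ) : ZMod p) := rfl
        rw [hYval, hω]
        simp only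
        rw [ZMod.val_natCast_of_lt hdivlt, Nat.mul_div_cancel' hdvd]
        have : ((w : ℕ) : ZMod (p^γ)) = u + (y : ZMod (p^γ)) := by
          rw [hw, ZMod.natCast_val, ZMod.cast_id]
        rw [this]; ring
      rw [← hYeq]
      rfl
  rw [step1]
  -- now evaluate the `t`-sum
  have split : ∀ t : ZMod p, ZMod.stdAddChar ((m : ZMod (p^γ)) * v
        + (m' : ZMod (p^γ)) * (-v - v*v*ω t)) =
      ZMod.stdAddChar (((m : ZMod (p^γ)) - (m' : ZMod (p^γ))) * v) *
      ZMod.stdAddChar ((-(m' : ZMod (p^γ)) * (v*v)) * ω t) := by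
    intro t
    rw [← AddChar.map_add_eq_mul]
    congr 1
    ring
  simp_rw [split]
  -- reduce the ω-sum to a character sum mod p
  set c : ZMod (p^γ) := -(m' : ZMod (p^γ)) * (v*v) with hc
  have hlow : ∀ t : ZMod p, ZMod.stdAddChar (c * ω t) =
      ZMod.stdAddChar (((c.val : ℕ) : ZMod p) * t) := by
    intro t
    have h1 : c * ω t = (((p^(γ-1) : ℕ) * ((c.val : ℕ) * (t.val : ℕ)) : ℤ) : ZMod (p^γ)) := by
      rw [hω]; simp only
      rw [Int.cast_mul, Int.cast_mul, Int.cast_natCast, Int.cast_natCast, Int.cast_natCast,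
        ZMod.natCast_val c, ZMod.cast_id]
      push_cast
      ring
    have h2 : (((c.val : ℕ) : ZMod p) * t) = (((c.val : ℕ) * (t.val : ℕ) : ℤ) : ZMod p) := by
      rw [Int.cast_mul, Int.cast_natCast, Int.cast_natCast, ZMod.natCast_val t, ZMod.cast_id]
    rw [h1, h2, std_lower (p^γ) (p^(γ-1)) p hrpos.ne' hq]
  simp_rw [hlow]
  have hcsum : ∑ t : ZMod p, ZMod.stdAddChar (((c.val : ℕ) : ZMod p) * t) = 0 := by
    have hb : ((c.val : ℕ) : ZMod p) ≠ 0 := by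
      have hcunit : IsUnit c := by
        rw [hc]
        exact ((isUnit_intCast_pow p γ hp (by omega) m' hm').neg).mul ((x⁻¹).isUnit.mul (x⁻¹).isUnit)
      have : ((c.val : ℕ) : ZMod p) =
          (ZMod.castHom (dvd_pow_self p (show γ ≠ 0 by omega)) (ZMod p)) c := by
        rw [ZMod.castHom_apply, ZMod.natCast_val]
      rw [this]
      exact (hcunit.map _).ne_zero
    simp_rw [mul_comm]
    rw [AddChar.sum_mulShift _ (ZMod.isPrimitive_stdAddChar _), if_neg hb]
    norm_num
  rw [← Finset.sum_mul, ← Finset.mul_sum, hcsum, mul_zero, zero_mul]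

/-- For a prime power `p^γ` (`γ ≥ 2`) and `m₂, m'₂` coprime to `p`:
`|∑*_{a mod p^γ} S(a, m₂; p^γ)·S(a, m'₂; p^γ)| ≤ 2 p^{2γ} [m₂ ≡ m'₂ mod p^{γ-1}]`. -/
theorem sum_kloosterman_product_prime_power (p : ℕ) [NeZero p] (hp : p.Prime)
    (γ : ℕ) (hγ : 2 ≤ γ) (m₂ m'₂ : ℤ)
    (h₂ : ¬ (p : ℤ) ∣ m₂) (h'₂ : ¬ (p : ℤ) ∣ m'₂) :
    ‖∑ a : (ZMod (p ^ γ))ˣ,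
        Kl (p ^ γ) (a : ZMod (p ^ γ)) (m₂ : ZMod (p ^ γ)) *
          Kl (p ^ γ) (a : ZMod (p ^ γ)) (m'₂ : ZMod (p ^ γ))‖ ≤
      2 * (p : ℝ) ^ (2 * γ) *
        (if (m₂ : ZMod (p ^ (γ - 1))) = (m'₂ : ZMod (p ^ (γ - 1))) then 1 else 0) := by
  haveI : Fact p.Prime := ⟨hp⟩
  have hγ1 : 1 ≤ γ := by omega
  set d : ZMod (p^γ) := (m₂ : ZMod (p^γ)) - (m'₂ : ZMod (p^γ)) with hd
  -- Step 1: open the Kloosterman sums and execute the a-sum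
  have key : (∑ a : (ZMod (p ^ γ))ˣ,
        Kl (p ^ γ) (a : ZMod (p ^ γ)) (m₂ : ZMod (p ^ γ)) *
          Kl (p ^ γ) (a : ZMod (p ^ γ)) (m'₂ : ZMod (p ^ γ)))
      = ∑ x : (ZMod (p^γ))ˣ, ∑ y : (ZMod (p^γ))ˣ,
          ZMod.stdAddChar ((m₂ : ZMod (p^γ)) * ((x⁻¹ : (ZMod (p^γ))ˣ) : ZMod (p^γ))
            + (m'₂ : ZMod (p^γ)) * ((y⁻¹ : (ZMod (p^γ))ˣ) : ZMod (p^γ))) *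
          ∑ a : (ZMod (p^γ))ˣ, ZMod.stdAddChar ((a : ZMod (p^γ)) *
            ((x : ZMod (p^γ)) + (y : ZMod (p^γ)))) := by
    unfold Kl
    simp_rw [eZ_eq_std, Finset.sum_mul_sum]
    have point : ∀ a x y : (ZMod (p^γ))ˣ,
        ZMod.stdAddChar ((a : ZMod (p^γ)) * (x : ZMod (p^γ))
            + (m₂ : ZMod (p^γ)) * ((x⁻¹ : (ZMod (p^γ))ˣ) : ZMod (p^γ))) *
          ZMod.stdAddChar ((a : ZMod (p^γ)) * (y : ZMod (p^γ))
            + (m'₂ : ZMod (p^γ)) * ((y⁻¹ : (ZMod (p^γ))ˣ) : ZMod (p^γ))) =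
        ZMod.stdAddChar ((m₂ : ZMod (p^γ)) * ((x⁻¹ : (ZMod (p^γ))ˣ) : ZMod (p^γ))
            + (m'₂ : ZMod (p^γ)) * ((y⁻¹ : (ZMod (p^γ))ˣ) : ZMod (p^γ))) *
          ZMod.stdAddChar ((a : ZMod (p^γ)) * ((x : ZMod (p^γ)) + (y : ZMod (p^γ)))) := by
      intro a x y
      rw [← AddChar.map_add_eq_mul, ← AddChar.map_add_eq_mul]
      congr 1
      ring
    simp_rw [point]
    rw [Finset.sum_comm]
    refine Finset.sum_congr rfl fun x _ => ?_
    rw [Finset.sum_comm]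
    refine Finset.sum_congr rfl fun y _ => ?_
    exact (Finset.mul_sum _ _ _).symm
  rw [key]
  simp_rw [ramanujan p γ hp hγ1, mul_sub]
  simp_rw [Finset.sum_sub_distrib]
  -- the second term vanishes
  have h2 : ∑ x : (ZMod (p^γ))ˣ, ∑ y : (ZMod (p^γ))ˣ,
      ZMod.stdAddChar ((m₂ : ZMod (p^γ)) * ((x⁻¹ : (ZMod (p^γ))ˣ) : ZMod (p^γ))
        + (m'₂ : ZMod (p^γ)) * ((y⁻¹ : (ZMod (p^γ))ˣ) : ZMod (p^γ))) *
      (if ((((x : ZMod (p^γ)) + (y : ZMod (p^γ))).val : ℕ) : ZMod (p^(γ-1))) = 0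
        then ((p^(γ-1) : ℕ) : ℂ) else 0) = 0 :=
    Finset.sum_eq_zero fun x _ => inner_vanish p γ hp hγ m₂ m'₂ h'₂ x
  rw [h2, sub_zero]
  -- evaluate the diagonal term
  have h1 : (∑ x : (ZMod (p^γ))ˣ, ∑ y : (ZMod (p^γ))ˣ,
      ZMod.stdAddChar ((m₂ : ZMod (p^γ)) * ((x⁻¹ : (ZMod (p^γ))ˣ) : ZMod (p^γ))
        + (m'₂ : ZMod (p^γ)) * ((y⁻¹ : (ZMod (p^γ))ˣ) : ZMod (p^γ))) *
      (if ((x : ZMod (p^γ)) + (y : ZMod (p^γ))) = 0 then ((p^γ : ℕ) : ℂ) else 0))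
      = ((p^γ : ℕ) : ℂ) * ((if d = 0 then ((p^γ : ℕ) : ℂ) else 0) -
          (if ((d.val : ℕ) : ZMod (p^(γ-1))) = 0 then ((p^(γ-1) : ℕ) : ℂ) else 0)) := by
    have inner : ∀ x : (ZMod (p^γ))ˣ, ∑ y : (ZMod (p^γ))ˣ,
        ZMod.stdAddChar ((m₂ : ZMod (p^γ)) * ((x⁻¹ : (ZMod (p^γ))ˣ) : ZMod (p^γ))
          + (m'₂ : ZMod (p^γ)) * ((y⁻¹ : (ZMod (p^γ))ˣ) : ZMod (p^γ))) *
        (if ((x : ZMod (p^γ)) + (y : ZMod (p^γ))) = 0 then ((p^γ : ℕ) : ℂ) else 0)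
        = ZMod.stdAddChar (d * ((x⁻¹ : (ZMod (p^γ))ˣ) : ZMod (p^γ))) * ((p^γ : ℕ) : ℂ) := by
      intro x
      have hyiff : ∀ y : (ZMod (p^γ))ˣ,
          (((x : ZMod (p^γ)) + (y : ZMod (p^γ))) = 0) ↔ y = -x := by
        intro y
        constructor
        · intro h
          apply Units.ext
          rw [Units.val_neg]
          exact eq_neg_of_add_eq_zero_right h
        · rintro rfl
          rw [Units.val_neg]
          ring
      have step : ∀ y : (ZMod (p^γ))ˣ,
          ZMod.stdAddChar ((m₂ : ZMod (p^γ)) * ((x⁻¹ : (ZMod (p^γ))ˣ) : ZMod (p^γ))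
            + (m'₂ : ZMod (p^γ)) * ((y⁻¹ : (ZMod (p^γ))ˣ) : ZMod (p^γ))) *
          (if ((x : ZMod (p^γ)) + (y : ZMod (p^γ))) = 0 then ((p^γ : ℕ) : ℂ) else 0)
          = if y = -x then (ZMod.stdAddChar ((m₂ : ZMod (p^γ)) * ((x⁻¹ : (ZMod (p^γ))ˣ) : ZMod (p^γ))
            + (m'₂ : ZMod (p^γ)) * (((y⁻¹ : (ZMod (p^γ))ˣ)) : ZMod (p^γ))) * ((p^γ : ℕ) : ℂ)) else 0 := by
        intro y
        rw [mul_ite, mul_zero, if_congr (hyiff y) rfl rfl]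
      simp_rw [step]
      rw [Finset.sum_ite_eq' Finset.univ (-x)]
      rw [if_pos (Finset.mem_univ _)]
      congr 2
      rw [inv_neg, Units.val_neg, hd]
      ring
    simp_rw [inner]
    rw [← Finset.sum_mul]
    have reidx : ∑ x : (ZMod (p^γ))ˣ,
        ZMod.stdAddChar (d * ((x⁻¹ : (ZMod (p^γ))ˣ) : ZMod (p^γ)))
        = ∑ x : (ZMod (p^γ))ˣ, ZMod.stdAddChar ((x : ZMod (p^γ)) * d) := by
      apply Fintype.sum_equiv (Equiv.inv (ZMod (p^γ))ˣ)
      intro x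
      rw [Equiv.inv_apply, mul_comm]
    rw [reidx, ramanujan p γ hp hγ1 d, mul_comm]
  rw [h1]
  -- connect the indicator conditions
  have hφ : ((d.val : ℕ) : ZMod (p^(γ-1))) = (m₂ : ZMod (p^(γ-1))) - (m'₂ : ZMod (p^(γ-1))) := by
    have hcast : ((d.val : ℕ) : ZMod (p^(γ-1))) =
        (ZMod.castHom (pow_dvd_pow p (show γ-1 ≤ γ by omega)) (ZMod (p^(γ-1)))) d := by
      rw [ZMod.castHom_apply, ZMod.natCast_val]
    rw [hcast, hd, map_sub, map_intCast, map_intCast]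
  by_cases hcase : (m₂ : ZMod (p^(γ-1))) = (m'₂ : ZMod (p^(γ-1)))
  · rw [if_pos hcase, mul_one]
    have hY : ((d.val : ℕ) : ZMod (p^(γ-1))) = 0 := by rw [hφ, hcase, sub_self]
    rw [if_pos hY]
    have hRN : ((p^(γ-1) : ℕ) : ℝ) ≤ ((p^γ : ℕ) : ℝ) :=
      Nat.cast_le.2 (Nat.pow_le_pow_right hp.pos (by omega))
    have hXle : ‖(if d = 0 then ((p^γ : ℕ) : ℂ) else 0)‖ ≤ ((p^γ : ℕ) : ℝ) := by
      by_cases hdz : d = 0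
      · rw [if_pos hdz, Complex.norm_natCast]
      · rw [if_neg hdz, norm_zero]
        positivity
    have habs : ‖((p^γ : ℕ) : ℂ) *
        ((if d = 0 then ((p^γ : ℕ) : ℂ) else 0) - ((p^(γ-1) : ℕ) : ℂ))‖
        ≤ ((p^γ : ℕ) : ℝ) * (((p^γ : ℕ) : ℝ) + ((p^(γ-1) : ℕ) : ℝ)) := by
      rw [norm_mul, Complex.norm_natCast]
      refine mul_le_mul_of_nonneg_left ?_ (Nat.cast_nonneg _)
      calc ‖(if d = 0 then ((p^γ : ℕ) : ℂ) else 0) - ((p^(γ-1) : ℕ) : ℂ)‖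
          ≤ ‖(if d = 0 then ((p^γ : ℕ) : ℂ) else 0)‖
            + ‖(((p^(γ-1) : ℕ) : ℂ))‖ := norm_sub_le _ _
        _ ≤ ((p^γ : ℕ) : ℝ) + ((p^(γ-1) : ℕ) : ℝ) := by
            rw [Complex.norm_natCast]
            exact add_le_add hXle le_rfl
    refine habs.trans ?_
    have hpow : (2 : ℝ) * (p : ℝ) ^ (2 * γ) = ((p^γ : ℕ) : ℝ) * (((p^γ : ℕ) : ℝ) + ((p^γ : ℕ) : ℝ)) := by
      push_cast
      rw [show 2*γ = γ + γ by ring, pow_add]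
      ring
    rw [hpow]
    have h0 : (0:ℝ) ≤ ((p^γ : ℕ) : ℝ) := Nat.cast_nonneg _
    nlinarith [hRN, h0]
  · rw [if_neg hcase, mul_zero]
    have hY : ¬ ((d.val : ℕ) : ZMod (p^(γ-1))) = 0 := by
      rw [hφ]
      intro h
      exact hcase (sub_eq_zero.1 h)
    have hX : ¬ d = 0 := by
      intro h
      apply hY
      rw [h]
      simp
    rw [if_neg hX, if_neg hY]
    simp
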